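/- All poles of the meromorphic function ξ ↦ 6(1 - cos ξ)/(ξ²(2 + cos ξ)) are simple, and they are exactly the points ξ = (2ℓ+1)π ± i·ln(2+√3) for ℓ ∈ ℤ. -/
import Mathlib


open Complex

/-- All poles of ξ ↦ 6(1 - cos ξ)/(ξ²(2 + cos ξ)) are simple and are exactly the
points (2ℓ+1)π ± i·ln(2+√3), ℓ ∈ ℤ.  The poles are the zeros of the denominator
factor 2 + cos ξ (the singularity at 0 being removable), and simplicity means the
derivative of 2 + cos at such a point does not vanish. -/
theorem stmt1 (ξ : ℂ) :
    (2 + Complex.cos ξ = 0 ↔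
      ∃ ℓ : ℤ, ξ = (2 * ℓ + 1) * Real.pi + Complex.I * Real.log (2 + Real.sqrt 3) ∨
        ξ = (2 * ℓ + 1) * Real.pi - Complex.I * Real.log (2 + Real.sqrt 3)) ∧
    (2 + Complex.cos ξ = 0 → deriv (fun z => 2 + Complex.cos z) ξ ≠ 0) := by
  have h3 : Real.sqrt 3 * Real.sqrt 3 = 3 := Real.mul_self_sqrt (by norm_num)
  have hpos : (0:ℝ) < 2 + Real.sqrt 3 := by positivity
  set L : ℝ := Real.log (2 + Real.sqrt 3) with hLdef
  have hmul : (2 + Real.sqrt 3) * (2 - Real.sqrt 3) = 1 := by nlinarith [h3]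
  have hinv : (2 + Real.sqrt 3)⁻¹ = 2 - Real.sqrt 3 :=
    inv_eq_of_mul_eq_one_right hmul
  have hcoshR : Real.cosh L = 2 := by
    rw [Real.cosh_eq, Real.exp_neg, Real.exp_log hpos, hinv]; ring
  have hcos0 : Complex.cos (↑Real.pi + I * ↑L) = -2 := by
    rw [Complex.cos_add, Complex.cos_pi, Complex.sin_pi, mul_comm I (L:ℂ),
      Complex.cos_mul_I, ← Complex.ofReal_cosh, hcoshR]
    push_cast
    ring
  constructor
  · rw [show (2 + Complex.cos ξ = 0) ↔ Complex.cos (↑Real.pi + I * ↑L) = Complex.cos ξ by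
      rw [hcos0]; constructor <;> intro h <;> linear_combination -h]
    rw [Complex.cos_eq_cos_iff]
    constructor
    · rintro ⟨k, hk | hk⟩
      · exact ⟨k, Or.inl (by push_cast; linear_combination hk)⟩
      · exact ⟨k - 1, Or.inr (by push_cast; linear_combination hk)⟩
    · rintro ⟨ℓ, hℓ | hℓ⟩
      · exact ⟨ℓ, Or.inl (by push_cast at hℓ ⊢; linear_combination hℓ)⟩
      · exact ⟨ℓ + 1, Or.inr (by push_cast at hℓ ⊢; linear_combination hℓ)⟩
  · intro h
    have hcos : Complex.cos ξ = -2 := by linear_combination h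
    have hd : deriv (fun z => 2 + Complex.cos z) ξ = -Complex.sin ξ := by
      simpa using (((Complex.hasDerivAt_cos ξ).const_add 2).deriv)
    rw [hd]
    intro h0
    have hs : Complex.sin ξ = 0 := by linear_combination -h0
    have := Complex.sin_sq_add_cos_sq ξ
    rw [hs, hcos] at this
    norm_num at this
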